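/- arXiv:2602.12121 — 5 statements merged into one kernel-verified Lean document; each statement's English description precedes it below -/
import Mathlib

section
/- For complex matrices A, B of compatible sizes, the block-circulant embedding is multiplicative with respect to the tensor T-product: bcirc(𝒜 * 𝒝) = bcirc(𝒜) · bcirc(𝒝), where 𝒜 * 𝒝 := fold(bcirc(𝒜)·unfold(𝒝)). -/
open Matrix

/-- Block-circulant embedding of a third-order tensor given by its frontal slices. -/
def bcirc {m n p : ℕ} (A : Fin p → Matrix (Fin m) (Fin n) ℂ) :
    Matrix (Fin p × Fin m) (Fin p × Fin n) ℂ :=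
  Matrix.of fun x y => A (x.1 - y.1) x.2 y.2

/-- Unfolding of a tensor: stacking of its frontal slices. -/
def unfold {n s p : ℕ} (B : Fin p → Matrix (Fin n) (Fin s) ℂ) :
    Matrix (Fin p × Fin n) (Fin s) ℂ :=
  Matrix.of fun x c => B x.1 x.2 c

/-- The T-product `𝒜 * 𝒝 = fold (bcirc 𝒜 · unfold 𝒝)`, expressed slice-wise
(`fold` is the inverse of `unfold`). -/
noncomputable def tProd {m n s p : ℕ} (A : Fin p → Matrix (Fin m) (Fin n) ℂ)
    (B : Fin p → Matrix (Fin n) (Fin s) ℂ) : Fin p → Matrix (Fin m) (Fin s) ℂ :=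
  fun k => Matrix.of fun r c => (bcirc A * unfold B) (k, r) c

/-!
Both sides are block matrices indexed by `ℤ/p`. The `(i, j)` block of `bcirc 𝒜 · bcirc 𝒝` is the
convolution `∑ₖ A(i - k) B(k - j)`, and the substitution `k = l + j` turns it into
`∑ₗ A(i - j - l) B(l)`, the slice `i - j` of `𝒜 * 𝒝`.
-/

theorem Fintype.sum_apply_sub_sub_eq {G M : Type*} [AddCommGroup G] [Fintype G]
    [AddCommMonoid M] (h : G → G → M) (x y : G) :
    ∑ l, h (x - y - l) l = ∑ k, h (x - k) (k - y) :=
  Fintype.sum_equiv (Equiv.addRight y) _ _ fun l => by simp [sub_sub, add_comm]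

section BlockCirculant

variable {m n s p : ℕ}

theorem bcirc_apply (A : Fin p → Matrix (Fin m) (Fin n) ℂ) (i j : Fin p) (r : Fin m)
    (c : Fin n) : bcirc A (i, r) (j, c) = A (i - j) r c :=
  rfl

theorem tProd_apply (A : Fin p → Matrix (Fin m) (Fin n) ℂ) (B : Fin p → Matrix (Fin n) (Fin s) ℂ)
    (k : Fin p) : tProd A B k = ∑ l, A (k - l) * B l := by
  ext r c
  simp only [tProd, bcirc, unfold, of_apply, mul_apply, Fintype.sum_prod_type, Matrix.sum_apply]

theorem bcirc_mul_bcirc_apply (A : Fin p → Matrix (Fin m) (Fin n) ℂ)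
    (B : Fin p → Matrix (Fin n) (Fin s) ℂ) (i j : Fin p) (r : Fin m) (c : Fin s) :
    (bcirc A * bcirc B) (i, r) (j, c) = (∑ k, A (i - k) * B (k - j)) r c := by
  simp only [bcirc, of_apply, mul_apply, Fintype.sum_prod_type, Matrix.sum_apply]

end BlockCirculant

/-- the block-circulant embedding is multiplicative with respect to
the tensor T-product: `bcirc (𝒜 * 𝒝) = bcirc 𝒜 ⬝ bcirc 𝒝`. -/
theorem bcirc_tProd {m n s p : ℕ} (A : Fin p → Matrix (Fin m) (Fin n) ℂ)
    (B : Fin p → Matrix (Fin n) (Fin s) ℂ) :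
    bcirc (tProd A B) = bcirc A * bcirc B := by
  ext ⟨i, r⟩ ⟨j, c⟩
  have : NeZero p := NeZero.of_pos i.pos
  rw [bcirc_mul_bcirc_apply, bcirc_apply, tProd_apply]
  exact congrArg (fun M => M r c) (Fintype.sum_apply_sub_sub_eq (fun a b => A a * B b) i j)
end

section
/- Symmetry of the geometric mean: for positive definite Hermitian matrices A, B ∈ ℂ^{n×n}, A^{1/2}(A^{-1/2} B A^{-1/2})^{1/2} A^{1/2} = B^{1/2}(B^{-1/2} A B^{-1/2})^{1/2} B^{1/2}; i.e., A # B = B # A. -/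
/-!
Both `SA * M1 * SA` and `SB * M2 * SB` are positive semidefinite solutions of the Riccati equation
`Y A⁻¹ Y = B`; for the second this is the equation `Y B⁻¹ Y = A` with the roles of `A` and `B`
swapped, which is equivalent for invertible `Y`. Positive semidefinite solutions are unique:
with `R = (A⁻¹)^{1/2}` the equation reads `(R Y R)² = R B R`, and positive semidefinite square
roots are unique.
-/

open Matrix
open scoped ComplexOrder

namespace Matrix

variable {n : Type*} [Fintype n]

theorem PosSemidef.mul_mul_same {𝕜 : Type*} [RCLike 𝕜] {X S : Matrix n n 𝕜}
    (hX : X.PosSemidef) (hS : S.IsHermitian) : (S * X * S).PosSemidef := by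
  simpa only [hS.eq] using hX.mul_mul_conjTranspose_same S

variable [DecidableEq n]

section Riccati

variable {R : Type*} [CommRing R]

def IsRiccatiSolution (A B Y : Matrix n n R) : Prop := Y * A⁻¹ * Y = B

theorem IsRiccatiSolution.symm {A B Y : Matrix n n R} (h : IsRiccatiSolution A B Y)
    (hA : IsUnit A) (hY : IsUnit Y) : IsRiccatiSolution B A Y := by
  rw [isUnit_iff_isUnit_det] at hA hY
  have hB_inv : B⁻¹ = Y⁻¹ * A * Y⁻¹ := by
    rw [← h, mul_inv_rev, mul_inv_rev, nonsing_inv_nonsing_inv _ hA, Matrix.mul_assoc]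
  rw [IsRiccatiSolution, hB_inv]
  simp only [Matrix.mul_assoc, mul_nonsing_inv_cancel_left _ _ hY, nonsing_inv_mul _ hY,
    Matrix.mul_one]

theorem isRiccatiSolution_mul_mul_of_mul_self_eq {S M B : Matrix n n R} (hS : IsUnit S)
    (hM : M * M = S⁻¹ * B * S⁻¹) : IsRiccatiSolution (S * S) B (S * M * S) := by
  rw [isUnit_iff_isUnit_det] at hS
  rw [IsRiccatiSolution, mul_inv_rev]
  calc S * M * S * (S⁻¹ * S⁻¹) * (S * M * S) = S * (M * M) * S := by
        simp only [Matrix.mul_assoc, mul_nonsing_inv_cancel_left _ _ hS,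
          nonsing_inv_mul_cancel_left _ _ hS]
    _ = B := by
        simp only [hM, Matrix.mul_assoc, mul_nonsing_inv_cancel_left _ _ hS,
          nonsing_inv_mul _ hS, Matrix.mul_one]

end Riccati

variable {𝕜 : Type*} [RCLike 𝕜]

theorem PosSemidef.eq_of_mul_self_eq {X Y : Matrix n n 𝕜} (hX : X.PosSemidef)
    (hY : Y.PosSemidef) (h : X * X = Y * Y) : X = Y := by
  open scoped MatrixOrder in
  exact (CFC.sq_eq_sq_iff X Y hX.nonneg hY.nonneg).mp (by rw [sq, sq, h])

open scoped MatrixOrder in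
theorem IsRiccatiSolution.unique {A B Y Z : Matrix n n 𝕜} (hA : A.PosDef)
    (hYs : IsRiccatiSolution A B Y) (hZs : IsRiccatiSolution A B Z)
    (hY : Y.PosSemidef) (hZ : Z.PosSemidef) : Y = Z := by
  set R := CFC.sqrt A⁻¹
  have hR : R.PosDef := (IsStrictlyPositive.sqrt A⁻¹ hA.inv.isStrictlyPositive).posDef
  have hRR : R * R = A⁻¹ := CFC.sqrt_mul_sqrt_self A⁻¹ hA.inv.posSemidef.nonneg
  have hsq (X : Matrix n n 𝕜) : R * X * R * (R * X * R) = R * (X * A⁻¹ * X) * R := by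
    simp only [← hRR, Matrix.mul_assoc]
  have hRYR : R * Y * R = R * Z * R :=
    (hY.mul_mul_same hR.1).eq_of_mul_self_eq (hZ.mul_mul_same hR.1) (by rw [hsq, hsq, hYs, hZs])
  exact hR.isUnit.mul_left_cancel (hR.isUnit.mul_right_cancel hRYR)

end Matrix

/-- symmetry of the geometric mean: for positive definite Hermitian
`A, B`, `A^{1/2}(A^{-1/2} B A^{-1/2})^{1/2} A^{1/2} = B^{1/2}(B^{-1/2} A B^{-1/2})^{1/2} B^{1/2}`,
i.e. `A # B = B # A`. Here `SA, SB` are the positive definite square roots of `A, B`,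
`M1` that of `SA⁻¹ B SA⁻¹`, and `M2` that of `SB⁻¹ A SB⁻¹`. -/
theorem geomMean_comm {n : ℕ} (A B SA SB M1 M2 : Matrix (Fin n) (Fin n) ℂ)
    (hA : A.PosDef) (hB : B.PosDef)
    (hSA : SA.PosDef) (hSA2 : SA * SA = A)
    (hSB : SB.PosDef) (hSB2 : SB * SB = B)
    (hM1 : M1.PosDef) (hM12 : M1 * M1 = SA⁻¹ * B * SA⁻¹)
    (hM2 : M2.PosDef) (hM22 : M2 * M2 = SB⁻¹ * A * SB⁻¹) :
    SA * M1 * SA = SB * M2 * SB := by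
  have h1 : IsRiccatiSolution A B (SA * M1 * SA) :=
    hSA2 ▸ isRiccatiSolution_mul_mul_of_mul_self_eq hSA.isUnit hM12
  have h2 : IsRiccatiSolution A B (SB * M2 * SB) :=
    (hSB2 ▸ isRiccatiSolution_mul_mul_of_mul_self_eq hSB.isUnit hM22).symm hB.isUnit
      ((hSB.isUnit.mul hM2.isUnit).mul hSB.isUnit)
  exact h1.unique hA h2 (hM1.posSemidef.mul_mul_same hSA.1) (hM2.posSemidef.mul_mul_same hSB.1)
end

section
/- Involutions with accretive-compatible structure are trivial: let X, Y ∈ ℂ^{n×n} be strictly accretive matrices such that (Y X^{-1})² = I. Then Y X^{-1} = I, i.e., Y = X. -/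
open Matrix

namespace Matrix

variable {𝕜 ι : Type*} [RCLike 𝕜] [Fintype ι]

def IsStrictlyAccretive (A : Matrix ι ι 𝕜) : Prop :=
  ∀ x : ι → 𝕜, x ≠ 0 → 0 < RCLike.re (star x ⬝ᵥ A *ᵥ x)

theorem IsStrictlyAccretive.add {A B : Matrix ι ι 𝕜} (hA : A.IsStrictlyAccretive)
    (hB : B.IsStrictlyAccretive) : (A + B).IsStrictlyAccretive := fun x hx => by
  rw [add_mulVec, dotProduct_add, map_add]
  exact add_pos (hA x hx) (hB x hx)

theorem IsStrictlyAccretive.isUnit [DecidableEq ι] {A : Matrix ι ι 𝕜}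
    (hA : A.IsStrictlyAccretive) : IsUnit A := by
  rw [isUnit_iff_isUnit_det, isUnit_iff_ne_zero]
  intro hdet
  obtain ⟨v, hv, hAv⟩ := exists_mulVec_eq_zero_iff.2 hdet
  simpa [hAv] using hA v hv

end Matrix

theorem eq_one_of_sq_eq_one_of_isUnit_add_one {R : Type*} [Ring R] {a : R} (ha : a ^ 2 = 1)
    (hunit : IsUnit (a + 1)) : a = 1 := by
  have hfactor : (a - 1) * (a + 1) = 0 := by
    rw [show (a - 1) * (a + 1) = a ^ 2 - 1 by noncomm_ring, ha, sub_self]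
  exact sub_eq_zero.1 (hunit.mul_left_eq_zero.1 hfactor)

/-- let `X, Y` be strictly accretive matrices with `(Y X⁻¹)² = I`.
Then `Y X⁻¹ = I`, i.e. `Y = X`. -/
theorem involution_accretive_trivial {n : ℕ} (X Y : Matrix (Fin n) (Fin n) ℂ)
    (hX : ∀ x : Fin n → ℂ, x ≠ 0 → 0 < (star x ⬝ᵥ X.mulVec x).re)
    (hY : ∀ x : Fin n → ℂ, x ≠ 0 → 0 < (star x ⬝ᵥ Y.mulVec x).re)
    (h : (Y * X⁻¹) ^ 2 = 1) :
    Y * X⁻¹ = 1 ∧ Y = X := by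
  have hXunit : IsUnit X := IsStrictlyAccretive.isUnit hX
  have hXdet : IsUnit X.det := (isUnit_iff_isUnit_det X).1 hXunit
  -- `Y X⁻¹ + 1 = (Y + X) X⁻¹`, and `Y + X` is again strictly accretive.
  have hadd : IsUnit (Y * X⁻¹ + 1) := by
    rw [← mul_nonsing_inv X hXdet, ← add_mul]
    exact (IsStrictlyAccretive.add hY hX).isUnit.mul (isUnit_nonsing_inv_iff.2 hXunit)
  have hM : Y * X⁻¹ = 1 := eq_one_of_sq_eq_one_of_isUnit_add_one h hadd
  refine ⟨hM, ?_⟩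
  calc Y = Y * X⁻¹ * X := (nonsing_inv_mul_cancel_right X Y hXdet).symm
    _ = X := by rw [hM, one_mul]
end

section
/- Ky–Fan majorization for Hermitian matrices: for Hermitian X, Y ∈ ℂ^{n×n}, the eigenvalue vector of X + Y is majorized by the sum of the decreasingly ordered eigenvalue vectors of X and Y: λ(X + Y) ≺ λ↓(X) + λ↓(Y). -/
/-!
Let `u₁, …, u_k` be orthonormal eigenvectors of `X + Y` for its `k` largest eigenvalues. The sum
of those eigenvalues is `∑ ⟪u_j, X u_j⟫ + ∑ ⟪u_j, Y u_j⟫`, and by Ky Fan's maximum principle each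
of the two sums is at most the sum of the `k` largest eigenvalues of `X`, resp. `Y`. For the
principle, expand the `u_j` in an eigenbasis of `X`: `∑ ⟪u_j, X u_j⟫ = ∑ λ_i c_i` with weights
`c_i ∈ [0, 1]` of total mass `k` (the rows and columns of a unitary matrix are unit vectors), and
such a pairing is largest when all the weight sits on the `k` largest `λ_i`. The total sums agree
because the trace is additive.
-/

open Matrix

/-- `sortDesc u` is `u` rearranged in nonincreasing order. -/
noncomputable def sortDesc {n : ℕ} (u : Fin n → ℝ) : Fin n → ℝ :=
  fun i => u (Tuple.sort u (Fin.rev i))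

/-- Majorization `u ≺ v`: every partial sum of the decreasingly sorted `u` is bounded by
the corresponding partial sum of `v`, with equal total sums. -/
def Majorizes {n : ℕ} (u v : Fin n → ℝ) : Prop :=
  (∀ k : ℕ,
      ∑ i : Fin n, (if (i : ℕ) < k then sortDesc u i else 0) ≤
        ∑ i : Fin n, (if (i : ℕ) < k then sortDesc v i else 0)) ∧
    ∑ i, u i = ∑ i, v i

open Finset

section Sorting

variable {n : ℕ}

noncomputable def descPerm (u : Fin n → ℝ) : Equiv.Perm (Fin n) :=
  Fin.revPerm.trans (Tuple.sort u)

lemma sortDesc_apply (u : Fin n → ℝ) (i : Fin n) : sortDesc u i = u (descPerm u i) := rfl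

lemma sortDesc_antitone (u : Fin n → ℝ) : Antitone (sortDesc u) :=
  fun _ _ hij => Tuple.monotone_sort u (Fin.rev_le_rev.mpr hij)

lemma sum_sortDesc (u : Fin n → ℝ) : ∑ i, sortDesc u i = ∑ i, u i := by
  simp only [sortDesc_apply]
  exact Equiv.sum_comp (descPerm u) u

lemma sortDesc_eq_self_of_antitone {v : Fin n → ℝ} (hv : Antitone v) : sortDesc v = v := by
  have hrev : Monotone (v ∘ Fin.revPerm) := fun _ _ hij => hv (Fin.rev_le_rev.mpr hij)
  funext i
  simpa [sortDesc] using congrFun (Tuple.unique_monotone (Tuple.monotone_sort v) hrev) i.rev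

noncomputable def sumLargest (k : ℕ) (u : Fin n → ℝ) : ℝ :=
  ∑ i : Fin n, if (i : ℕ) < k then sortDesc u i else 0

lemma sumLargest_min (k : ℕ) (u : Fin n → ℝ) : sumLargest (min n k) u = sumLargest k u := by
  simp only [sumLargest, Nat.lt_min, Fin.is_lt, true_and]

lemma sumLargest_sortDesc_add_sortDesc (k : ℕ) (u v : Fin n → ℝ) :
    sumLargest k (sortDesc u + sortDesc v) = sumLargest k u + sumLargest k v := by
  have hanti : Antitone (sortDesc u + sortDesc v) := (sortDesc_antitone u).add (sortDesc_antitone v)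
  rw [sumLargest, sortDesc_eq_self_of_antitone hanti, sumLargest, sumLargest, ← sum_add_distrib]
  refine sum_congr rfl fun i _ => ?_
  split_ifs <;> simp

noncomputable def topIndices (k : ℕ) (u : Fin n → ℝ) : Finset (Fin n) :=
  ({i | (i : ℕ) < k} : Finset (Fin n)).map (descPerm u).toEmbedding

lemma card_topIndices (k : ℕ) (u : Fin n → ℝ) : #(topIndices k u) = min n k := by
  rw [topIndices, card_map, Fin.card_filter_val_lt]

lemma sum_topIndices (k : ℕ) (u : Fin n → ℝ) : ∑ j ∈ topIndices k u, u j = sumLargest k u := by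
  rw [topIndices, sum_map, sumLargest, ← sum_filter]
  rfl

lemma Antitone.sum_mul_le_sum_ite_lt {w d : Fin n → ℝ} (hw : Antitone w) (hd0 : ∀ i, 0 ≤ d i)
    (hd1 : ∀ i, d i ≤ 1) {k : ℕ} (hsum : ∑ i, d i = k) :
    ∑ i, w i * d i ≤ ∑ i : Fin n, if (i : ℕ) < k then w i else 0 := by
  have hkn : k ≤ n := by
    have : ∑ i, d i ≤ n := by simpa using sum_le_sum fun i (_ : i ∈ univ) => hd1 i
    exact_mod_cast hsum ▸ this
  -- With `t` between the first `k` entries of `w` and the others, every term of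
  -- `∑ (w i - t) * (d i - [i < k])` is `≤ 0`, and `∑ (d i - [i < k]) = 0`.
  obtain ⟨t, hlt, hge⟩ : ∃ t, (∀ i : Fin n, (i : ℕ) < k → t ≤ w i) ∧
      ∀ i : Fin n, ¬ (i : ℕ) < k → w i ≤ t := by
    rcases Nat.eq_zero_or_pos n with rfl | hn
    · exact ⟨0, fun i => i.elim0, fun i => i.elim0⟩
    refine ⟨w ⟨k - 1, by omega⟩, fun i hi => hw (Fin.mk_le_mk.mpr ?_),
      fun i hi => hw (Fin.mk_le_mk.mpr ?_)⟩ <;> omega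
  have hterm : ∀ i : Fin n, w i * d i - (if (i : ℕ) < k then w i else 0)
      ≤ t * (d i - if (i : ℕ) < k then 1 else 0) := by
    intro i
    by_cases hi : (i : ℕ) < k
    · simp only [if_pos hi]; nlinarith [hlt i hi, hd1 i]
    · simp only [if_neg hi]; nlinarith [hge i hi, hd0 i]
  have hcount : ∑ i : Fin n, (if (i : ℕ) < k then (1 : ℝ) else 0) = k := by
    rw [sum_boole, Fin.card_filter_val_lt, min_eq_right hkn]
  have := sum_le_sum fun i (_ : i ∈ univ) => hterm i
  rw [sum_sub_distrib, ← mul_sum, sum_sub_distrib, hsum, hcount, sub_self, mul_zero] at this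
  linarith

lemma sum_mul_le_sumLargest (v : Fin n → ℝ) {c : Fin n → ℝ} (hc0 : ∀ i, 0 ≤ c i)
    (hc1 : ∀ i, c i ≤ 1) {k : ℕ} (hsum : ∑ i, c i = k) :
    ∑ i, v i * c i ≤ sumLargest k v := by
  rw [← Equiv.sum_comp (descPerm v)]
  exact (sortDesc_antitone v).sum_mul_le_sum_ite_lt (fun _ => hc0 _) (fun _ => hc1 _)
    ((Equiv.sum_comp (descPerm v) c).trans hsum)

end Sorting

namespace Matrix

variable {𝕜 : Type*} [RCLike 𝕜] {m : Type*} [Fintype m] [DecidableEq m]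

lemma star_mul_diagonal_mul_apply_self (W : Matrix m m 𝕜) (d : m → ℝ) (i : m) :
    (star W * diagonal (RCLike.ofReal ∘ d : m → 𝕜) * W) i i =
      ((∑ j, d j * ‖W j i‖ ^ 2 : ℝ) : 𝕜) := by
  rw [mul_apply]
  simp only [mul_diagonal, star_apply, RCLike.star_def, Function.comp_apply, RCLike.ofReal_sum,
    RCLike.ofReal_mul, RCLike.ofReal_pow, ← RCLike.conj_mul]
  exact sum_congr rfl fun j _ => by ring

lemma sum_norm_sq_col_eq_one {W : Matrix m m 𝕜} (hW : W ∈ unitaryGroup m 𝕜)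
    (i : m) : ∑ j, ‖W j i‖ ^ 2 = 1 := by
  have h := star_mul_diagonal_mul_apply_self W 1 i
  simp only [Pi.one_apply, one_mul, Function.comp_def, RCLike.ofReal_one] at h
  rw [diagonal_one, mul_one, mem_unitaryGroup_iff'.mp hW, one_apply_eq] at h
  exact_mod_cast h.symm

lemma sum_norm_sq_row_eq_one {W : Matrix m m 𝕜} (hW : W ∈ unitaryGroup m 𝕜)
    (j : m) : ∑ i, ‖W j i‖ ^ 2 = 1 := by
  simpa [star_apply] using sum_norm_sq_col_eq_one (Unitary.star_mem hW) j

end Matrix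

namespace Matrix.IsHermitian

variable {𝕜 : Type*} [RCLike 𝕜]

lemma sum_eigenvalues_eq_re_trace {m : Type*} [Fintype m] [DecidableEq m] {A : Matrix m m 𝕜}
    (hA : A.IsHermitian) : ∑ i, hA.eigenvalues i = RCLike.re A.trace := by
  simp [hA.trace_eq_sum_eigenvalues]

lemma re_diag_conj_eigenvectorUnitary {m : Type*} [Fintype m] [DecidableEq m]
    {A : Matrix m m 𝕜} (hA : A.IsHermitian) (j : m) :
    RCLike.re ((star (hA.eigenvectorUnitary : Matrix m m 𝕜) * A * hA.eigenvectorUnitary) j j) =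
      hA.eigenvalues j := by
  have h := hA.conjStarAlgAut_star_eigenvectorUnitary
  rw [Unitary.conjStarAlgAut_star_apply] at h
  simp [h]

/-- Ky Fan's maximum principle. -/
theorem sum_re_diag_conj_le_sumLargest {n : ℕ} {A : Matrix (Fin n) (Fin n) 𝕜}
    (hA : A.IsHermitian) {U : Matrix (Fin n) (Fin n) 𝕜} (hU : U ∈ unitaryGroup (Fin n) 𝕜)
    (S : Finset (Fin n)) :
    ∑ i ∈ S, RCLike.re ((star U * A * U) i i) ≤ sumLargest #S hA.eigenvalues := by
  set W := star (hA.eigenvectorUnitary : Matrix (Fin n) (Fin n) 𝕜) * U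
  have hW : W ∈ unitaryGroup (Fin n) 𝕜 := mul_mem (Unitary.star_mem hA.eigenvectorUnitary.2) hU
  have hconj : star U * A * U = star W * diagonal (RCLike.ofReal ∘ hA.eigenvalues) * W := by
    conv_lhs => rw [hA.spectral_theorem]
    simp only [W, Unitary.conjStarAlgAut_apply, star_mul, star_star, Matrix.mul_assoc]
  have hdiag (i : Fin n) : RCLike.re ((star U * A * U) i i) =
      ∑ j, hA.eigenvalues j * ‖W j i‖ ^ 2 := by
    rw [hconj, star_mul_diagonal_mul_apply_self, RCLike.ofReal_re]
  set c : Fin n → ℝ := fun j => ∑ i ∈ S, ‖W j i‖ ^ 2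
  have hc1 (j : Fin n) : c j ≤ 1 := by
    rw [← sum_norm_sq_row_eq_one hW j]
    exact sum_le_sum_of_subset_of_nonneg (subset_univ S) fun i _ _ => sq_nonneg _
  have hcsum : ∑ j, c j = #S := by
    rw [sum_comm, sum_congr rfl fun i _ => sum_norm_sq_col_eq_one hW i]
    simp
  calc ∑ i ∈ S, RCLike.re ((star U * A * U) i i) = ∑ j, hA.eigenvalues j * c j := by
        simp only [hdiag, c, mul_sum]
        exact sum_comm
    _ ≤ sumLargest #S hA.eigenvalues :=
        sum_mul_le_sumLargest _ (fun j => sum_nonneg fun i _ => sq_nonneg _) hc1 hcsum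

end Matrix.IsHermitian

/-- Ky–Fan majorization: for Hermitian `X, Y`, the eigenvalues of
`X + Y` are majorized by the sum of the decreasingly ordered eigenvalue vectors of
`X` and `Y`. -/
theorem kyFan_majorization {n : ℕ} (X Y : Matrix (Fin n) (Fin n) ℂ)
    (hX : X.IsHermitian) (hY : Y.IsHermitian) :
    Majorizes ((hX.add hY).eigenvalues)
      (sortDesc hX.eigenvalues + sortDesc hY.eigenvalues) := by
  set hZ := hX.add hY
  refine ⟨fun k => ?_, ?_⟩
  · change sumLargest k _ ≤ sumLargest k _
    set U := (hZ.eigenvectorUnitary : Matrix (Fin n) (Fin n) ℂ)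
    set T := topIndices k hZ.eigenvalues
    have hsplit (j : Fin n) : hZ.eigenvalues j =
        RCLike.re ((star U * X * U) j j) + RCLike.re ((star U * Y * U) j j) := by
      rw [← hZ.re_diag_conj_eigenvectorUnitary, Matrix.mul_add, Matrix.add_mul,
        Matrix.add_apply, map_add]
    calc sumLargest k hZ.eigenvalues
        = ∑ j ∈ T, RCLike.re ((star U * X * U) j j) +
            ∑ j ∈ T, RCLike.re ((star U * Y * U) j j) := by
          rw [← sum_topIndices, ← sum_add_distrib]
          exact sum_congr rfl fun j _ => hsplit j
      _ ≤ sumLargest #T hX.eigenvalues + sumLargest #T hY.eigenvalues :=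
          add_le_add (hX.sum_re_diag_conj_le_sumLargest hZ.eigenvectorUnitary.2 T)
            (hY.sum_re_diag_conj_le_sumLargest hZ.eigenvectorUnitary.2 T)
      _ = sumLargest k (sortDesc hX.eigenvalues + sortDesc hY.eigenvalues) := by
          rw [card_topIndices, sumLargest_min, sumLargest_min, sumLargest_sortDesc_add_sortDesc]
  · simp only [Pi.add_apply, sum_add_distrib, sum_sortDesc,
      Matrix.IsHermitian.sum_eigenvalues_eq_re_trace, Matrix.trace_add, map_add]
end

section
/- Lower bound for phase rank: for a sectorial matrix A ∈ ℂ^{n×n}, prank(A) ≥ min over positive definite Hermitian M of rank(A − M), and this minimum equals min over invertible T ∈ ℂ^{n×n} of rank(T^H A T − I). -/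
open Matrix Real
open scoped ComplexOrder

/-! Taking `M = Tᴴ T`, the matrix `A - M = Tᴴ (D - 1) T` has the rank of `D - 1`, and
`e^{iφ} = 1` forces `φ = 0` for `φ ∈ (-π, π]`. The two minima agree because every positive
definite `M` is `Tᴴ T` with `T` invertible, and congruence by `T⁻¹` turns `A - Tᴴ T` into
`(T⁻¹)ᴴ A T⁻¹ - 1`. -/

theorem Complex.exp_mul_I_eq_one_iff_of_mem_Ioc {θ : ℝ} (hθ : θ ∈ Set.Ioc (-π) π) :
    Complex.exp (θ * Complex.I) = 1 ↔ θ = 0 := by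
  refine ⟨fun h => ?_, fun h => by simp [h]⟩
  have hθ' : θ ∈ Set.Ioc (-π) (-π + 2 * π) := by convert hθ using 2; ring
  rw [← (toIocMod_eq_self two_pi_pos).mpr hθ', ← Complex.arg_exp_mul_I, h, Complex.arg_one]

namespace Matrix

section Congruence

variable {ι R : Type*} [Fintype ι] [DecidableEq ι] [CommRing R] [StarRing R]

theorem rank_conjTranspose_mul_mul_of_isUnit_det {S : Matrix ι ι R} (hS : IsUnit S.det)
    (B : Matrix ι ι R) : (Sᴴ * B * S).rank = B.rank := by
  rw [rank_mul_eq_left_of_isUnit_det _ _ hS, rank_mul_eq_right_of_isUnit_det _ _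
    (by simpa [det_conjTranspose] using hS.star)]

theorem rank_sub_conjTranspose_mul_self {T : Matrix ι ι R} (hT : IsUnit T.det)
    (A : Matrix ι ι R) : (A - Tᴴ * T).rank = ((T⁻¹)ᴴ * A * T⁻¹ - 1).rank := by
  rw [← rank_conjTranspose_mul_mul_of_isUnit_det (isUnit_nonsing_inv_det T hT),
    mul_sub, sub_mul, mul_assoc _ (_ * _), mul_assoc Tᴴ, mul_nonsing_inv _ hT, mul_one,
    ← conjTranspose_mul, mul_nonsing_inv _ hT, conjTranspose_one]

theorem rank_conjTranspose_mul_diagonal_mul_sub_conjTranspose_mul_self {K : Type*} [Field K]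
    [StarRing K] [DecidableEq K] {T : Matrix ι ι K} (hT : IsUnit T.det) (d : ι → K) :
    (Tᴴ * diagonal d * T - Tᴴ * T).rank = Fintype.card {i // d i ≠ 1} := by
  have hfactor : Tᴴ * diagonal d * T - Tᴴ * T = Tᴴ * diagonal (fun i => d i - 1) * T := by
    rw [← diagonal_sub, diagonal_one, mul_sub, sub_mul, mul_one]
  rw [hfactor, rank_conjTranspose_mul_mul_of_isUnit_det hT, rank_diagonal]
  exact Fintype.card_congr (Equiv.subtypeEquivRight fun i => by simp [sub_eq_zero])

variable {𝕜 : Type*} [RCLike 𝕜]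

theorem posDef_conjTranspose_mul_self_of_isUnit_det {T : Matrix ι ι 𝕜} (hT : IsUnit T.det) :
    (Tᴴ * T).PosDef :=
  PosDef.conjTranspose_mul_self T
    (mulVec_injective_iff_isUnit.mpr ((isUnit_iff_isUnit_det T).mpr hT))

open scoped MatrixOrder in
theorem PosDef.exists_eq_conjTranspose_mul_self {M : Matrix ι ι 𝕜} (hM : M.PosDef) :
    ∃ T : Matrix ι ι 𝕜, IsUnit T.det ∧ M = Tᴴ * T := by
  obtain ⟨T, hT, rfl⟩ := CStarAlgebra.isStrictlyPositive_iff_eq_star_mul_self.mp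
    hM.isStrictlyPositive
  exact ⟨T, (isUnit_iff_isUnit_det T).mp hT, rfl⟩

theorem setOf_rank_sub_posDef_eq (A : Matrix ι ι 𝕜) :
    {r : ℕ | ∃ M : Matrix ι ι 𝕜, M.PosDef ∧ (A - M).rank = r} =
      {r : ℕ | ∃ S : Matrix ι ι 𝕜, IsUnit S.det ∧ (Sᴴ * A * S - 1).rank = r} := by
  ext r
  constructor
  · rintro ⟨M, hM, rfl⟩
    obtain ⟨T, hT, rfl⟩ := hM.exists_eq_conjTranspose_mul_self
    exact ⟨T⁻¹, isUnit_nonsing_inv_det T hT, (rank_sub_conjTranspose_mul_self hT A).symm⟩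
  · rintro ⟨S, hS, rfl⟩
    have hS' := isUnit_nonsing_inv_det S hS
    refine ⟨(S⁻¹)ᴴ * S⁻¹, posDef_conjTranspose_mul_self_of_isUnit_det hS', ?_⟩
    rw [rank_sub_conjTranspose_mul_self hS', nonsing_inv_nonsing_inv S hS]

end Congruence

end Matrix

theorem phaseRank_lower_bound_general {n : ℕ} (T : Matrix (Fin n) (Fin n) ℂ)
    (hT : IsUnit T.det) (φ : Fin n → ℝ)
    (hφ : ∀ k, φ k ∈ Set.Ioc (-π) π)
    (A : Matrix (Fin n) (Fin n) ℂ)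
    (hA : A = Tᴴ * Matrix.diagonal (fun k => Complex.exp (φ k * Complex.I)) * T) :
    sInf {r : ℕ | ∃ M : Matrix (Fin n) (Fin n) ℂ, M.PosDef ∧ (A - M).rank = r} ≤
        Fintype.card {k : Fin n // φ k ≠ 0} ∧
      sInf {r : ℕ | ∃ M : Matrix (Fin n) (Fin n) ℂ, M.PosDef ∧ (A - M).rank = r} =
        sInf {r : ℕ | ∃ S : Matrix (Fin n) (Fin n) ℂ, IsUnit S.det ∧
          (Sᴴ * A * S - 1).rank = r} := by
  refine ⟨Nat.sInf_le ⟨Tᴴ * T, posDef_conjTranspose_mul_self_of_isUnit_det hT, ?_⟩,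
    by rw [setOf_rank_sub_posDef_eq]⟩
  rw [hA, rank_conjTranspose_mul_diagonal_mul_sub_conjTranspose_mul_self hT]
  exact Fintype.card_congr (Equiv.subtypeEquivRight fun k =>
    (Complex.exp_mul_I_eq_one_iff_of_mem_Ioc (hφ k)).not)

/-- for a sectorial matrix `A = Tᴴ D T` (with `T` invertible,
`D = diag(e^{iφ_k})`, canonical phases `φ_k ∈ (-π, π]` spanning an interval of length
`< π`), the phase rank `prank A = #{k : φ_k ≠ 0}` dominates the minimum of
`rank (A - M)` over positive definite Hermitian `M`, and this minimum equals the
minimum of `rank (Sᴴ A S - I)` over invertible `S`. -/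
theorem phaseRank_lower_bound {n : ℕ} (T : Matrix (Fin n) (Fin n) ℂ)
    (hT : IsUnit T.det) (φ : Fin n → ℝ)
    (hφ : ∀ k, φ k ∈ Set.Ioc (-π) π)
    (hspread : ∀ k l, φ k - φ l < π)
    (A : Matrix (Fin n) (Fin n) ℂ)
    (hA : A = Tᴴ * Matrix.diagonal (fun k => Complex.exp (φ k * Complex.I)) * T) :
    sInf {r : ℕ | ∃ M : Matrix (Fin n) (Fin n) ℂ, M.PosDef ∧ (A - M).rank = r} ≤
        Fintype.card {k : Fin n // φ k ≠ 0} ∧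
      sInf {r : ℕ | ∃ M : Matrix (Fin n) (Fin n) ℂ, M.PosDef ∧ (A - M).rank = r} =
        sInf {r : ℕ | ∃ S : Matrix (Fin n) (Fin n) ℂ, IsUnit S.det ∧
          (Sᴴ * A * S - 1).rank = r} :=
  phaseRank_lower_bound_general T hT φ hφ A hA
end
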